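/- In the translated program T(P), for any initial goal containing no constraints of the form a_r(X̄,M), the following invariant holds in every ω_p-reachable state: if a_r(X̄,M_1)#i_1 and a_r(X̄,M_2)#i_2 are both in the CHR constraint store (same predicate a and same arguments X̄), then i_1 = i_2 and M_1 = M_2; consequently every assertion a(X̄), whether asserted positively, negatively or both, is represented by at most one a_r constraint in the store, and the number of strong prefix firings of the set/deletion-semantics rules is bounded by the number of assertions of a(X̄) and del(a(X̄)). -/

import Mathlib

namespace LA2CHR

/-- Mode indicators: positively asserted (`p`), negatively asserted (`n`), or both (`b`). -/
inductive Mode : Type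
  | p | n | b
deriving DecidableEq

/-- CHR constraints of the translated program `T(P)`: for each ground user-defined
LA atom `a`, `raw a` is the CHR constraint `a(X̄)`, `rawDel a` is `del(a(X̄))`, and
`rep a m` is the representation constraint `a_r(X̄, m)` with mode indicator `m`. -/
inductive TC (α : Type) : Type
  | raw : α → TC α
  | rawDel : α → TC α
  | rep : α → Mode → TC α
deriving DecidableEq

/-- Ground Logical Algorithms assertions: positive (`pos a` is `a`) or
negative (`del a` is `del(a)`). -/
inductive LAAtom (α : Type) : Type
  | pos : α → LAAtom α
  | del : α → LAAtom α
deriving DecidableEq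

/-- A ground instance of a Logical Algorithms rule, with the comparison antecedents
already evaluated away: a ground instance belongs to the program iff its comparisons
are true.  `posA` are the (distinct) positive user-defined ground antecedents, `negA`
the atoms of the negative (`del`) antecedents, `concl` the instantiated conclusion and
`prio` the instantiated rule priority. -/
structure Inst (α : Type) where
  prio : ℕ
  posA : Finset α
  negA : Finset α
  concl : Finset (LAAtom α)

variable {α : Type}

/-- Applicability of a ground rule instance of `P` in an LA state
(the priority condition is not included). -/
def LAApplicable (P : Set (Inst α)) (σ : Set (LAAtom α)) (ι : Inst α) : Prop :=
  ι ∈ P ∧ (∀ a ∈ ι.posA, LAAtom.pos a ∈ σ ∧ LAAtom.del a ∉ σ) ∧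
    (∀ a ∈ ι.negA, LAAtom.del a ∈ σ) ∧ ¬ ↑ι.concl ⊆ σ

/-- The `Apply` transition of Logical Algorithms: a highest-priority applicable ground
rule instance whose conclusion is not yet contained in the state fires. -/
def LAStep (P : Set (Inst α)) (σ σ' : Set (LAAtom α)) : Prop :=
  ∃ ι, LAApplicable P σ ι ∧ σ' = σ ∪ ↑ι.concl ∧
    ∀ ι', LAApplicable P σ ι' → ι.prio ≤ ι'.prio

/-- Names of the rules of the translated CHR^rp program `T(P)`: the six
set/deletion-semantics rule schemas (for all user-defined predicates at once,
instantiated per ground atom), and one propagation rule per ground LA rule instance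
(the ground collapse of the rules `r_ρ`). -/
inductive RuleTag (α : Type) : Type
  | keepPos | mergePos | newPos | keepNeg | mergeNeg | newNeg
  | inst : Inst α → RuleTag α

/-- Rule priorities of `T(P)`: the update rules have priority 1, the rules creating a
fresh representation have priority 2, and the translation of an LA rule of priority
`p` has priority `p + 2`. -/
def RuleTag.prio : RuleTag α → ℕ
  | .keepPos => 1
  | .mergePos => 1
  | .keepNeg => 1
  | .mergeNeg => 1
  | .newPos => 2
  | .newNeg => 2
  | .inst ι => ι.prio + 2

/-- CHR^rp execution states `⟨G, S, true, T⟩_n`: goal, CHR constraint store of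
identified constraints, propagation history (recording a rule together with the set of
identified constraints it fired on) and next free identifier.  As the translated
program has no built-in tell constraints, the built-in store is always `true` and is
omitted. -/
structure CState (α : Type) where
  goal : Multiset (TC α)
  store : Set (TC α × ℕ)
  hist : Set (RuleTag α × Set (TC α × ℕ))
  next : ℕ

/-- Conclusion atoms as CHR constraints. -/
def toTC : LAAtom α → TC α
  | .pos a => .raw a
  | .del a => .rawDel a

/-- `Fires P χ t H R B`: rule `t` of `T(P)` has an instance in state `χ` matching the
set `H` of identified stored head constraints, of which the ones in `R` are removed,
with instantiated body `B`.  This comprises all conditions of the ω_p `Apply`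
transition except the empty-goal, propagation-history and priority conditions. -/
inductive Fires (P : Set (Inst α)) (χ : CState α) :
    RuleTag α → Set (TC α × ℕ) → Set (TC α × ℕ) → Multiset (TC α) → Prop
  | keepPos (a : α) (m : Mode) (i j : ℕ) : m ≠ Mode.n →
      (TC.rep a m, i) ∈ χ.store → (TC.raw a, j) ∈ χ.store →
      Fires P χ .keepPos {(TC.rep a m, i), (TC.raw a, j)} {(TC.raw a, j)} 0
  | mergePos (a : α) (i j : ℕ) :
      (TC.rep a Mode.n, i) ∈ χ.store → (TC.raw a, j) ∈ χ.store →
      Fires P χ .mergePos {(TC.rep a Mode.n, i), (TC.raw a, j)}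
        {(TC.rep a Mode.n, i), (TC.raw a, j)} {TC.rep a Mode.b}
  | newPos (a : α) (j : ℕ) : (TC.raw a, j) ∈ χ.store →
      Fires P χ .newPos {(TC.raw a, j)} {(TC.raw a, j)} {TC.rep a Mode.p}
  | keepNeg (a : α) (m : Mode) (i j : ℕ) : m ≠ Mode.p →
      (TC.rep a m, i) ∈ χ.store → (TC.rawDel a, j) ∈ χ.store →
      Fires P χ .keepNeg {(TC.rep a m, i), (TC.rawDel a, j)} {(TC.rawDel a, j)} 0
  | mergeNeg (a : α) (i j : ℕ) :
      (TC.rep a Mode.p, i) ∈ χ.store → (TC.rawDel a, j) ∈ χ.store →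
      Fires P χ .mergeNeg {(TC.rep a Mode.p, i), (TC.rawDel a, j)}
        {(TC.rep a Mode.p, i), (TC.rawDel a, j)} {TC.rep a Mode.b}
  | newNeg (a : α) (j : ℕ) : (TC.rawDel a, j) ∈ χ.store →
      Fires P χ .newNeg {(TC.rawDel a, j)} {(TC.rawDel a, j)} {TC.rep a Mode.n}
  | inst (ι : Inst α) (fp fn : α → ℕ) (fm : α → Mode) : ι ∈ P →
      (∀ a ∈ ι.posA, (TC.rep a Mode.p, fp a) ∈ χ.store) →
      (∀ a ∈ ι.negA, fm a ≠ Mode.p ∧ (TC.rep a (fm a), fn a) ∈ χ.store) →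
      Fires P χ (.inst ι)
        ((fun a => (TC.rep a Mode.p, fp a)) '' ↑ι.posA ∪
          (fun a => (TC.rep a (fm a), fn a)) '' ↑ι.negA)
        ∅ (Multiset.map toTC ι.concl.val)

/-- Transition labels: `Introduce`, or `Apply` of a given rule of `T(P)`. -/
inductive Lab (α : Type) : Type
  | intro : Lab α
  | apply : RuleTag α → Lab α

variable [DecidableEq α]

/-- The transitions of the priority semantics ω_p for the translated program `T(P)`:
`Introduce` moves a constraint from the goal to the store with a fresh identifier;
`Apply` (possible only when the goal is empty) fires an instance of a rule whose
history tuple is not yet recorded and such that no fireable rule instance has a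
strictly higher priority. -/
inductive Step (P : Set (Inst α)) : CState α → Lab α → CState α → Prop
  | intro (χ : CState α) (c : TC α) : c ∈ χ.goal →
      Step P χ .intro ⟨χ.goal.erase c, insert (c, χ.next) χ.store, χ.hist, χ.next + 1⟩
  | apply (χ : CState α) (t : RuleTag α) (H R : Set (TC α × ℕ)) (B : Multiset (TC α)) :
      χ.goal = 0 → Fires P χ t H R B → (t, H) ∉ χ.hist →
      (∀ t' H' R' B', Fires P χ t' H' R' B' → (t', H') ∉ χ.hist →
        RuleTag.prio t ≤ RuleTag.prio t') →
      Step P χ (.apply t) ⟨B, χ.store \ R, insert (t, H) χ.hist, χ.next⟩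

/-- Some ω_p transition. -/
def StepAny (P : Set (Inst α)) (χ χ' : CState α) : Prop := ∃ l, Step P χ l χ'

/-- An ω_p transition that is an `Introduce` or fires a rule of priority 1 or 2. -/
def Step2 (P : Set (Inst α)) (χ χ' : CState α) : Prop :=
  ∃ l, Step P χ l χ' ∧ ∀ t, l = Lab.apply t → RuleTag.prio t ≤ 2

/-- Membership in `A = G ∪ chr(S)`. -/
def memA (χ : CState α) (c : TC α) : Prop := c ∈ χ.goal ∨ ∃ i, (c, i) ∈ χ.store

/-- The mapping from (reachable) CHR^rp execution states of `T(P)` to LA states. -/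
def chrToLa (χ : CState α) : Set (LAAtom α) :=
  {x | (∃ a, x = LAAtom.pos a ∧
          (memA χ (TC.raw a) ∨ ∃ m, m ≠ Mode.n ∧ memA χ (TC.rep a m))) ∨
       (∃ a, x = LAAtom.del a ∧
          (memA χ (TC.rawDel a) ∨ ∃ m, m ≠ Mode.p ∧ memA χ (TC.rep a m)))}

/-- Initial states `⟨G, ∅, true, ∅⟩_n` where the goal `G` contains only constraints of
the forms `a(X̄)` and `del(a(X̄))` (no `a_r` constraints). -/
def Init (χ : CState α) : Prop :=
  (∀ c ∈ χ.goal, ∃ a, c = TC.raw a ∨ c = TC.rawDel a) ∧ χ.store = ∅ ∧ χ.hist = ∅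

/-- Reachability (w.r.t. ω_p and program `T(P)`) from an initial state. -/
def Reachable (P : Set (Inst α)) (χ : CState α) : Prop :=
  ∃ χ₀, Init χ₀ ∧ Relation.ReflTransGen (StepAny P) χ₀ χ

/-- Pre-normal form: empty goal, the store contains only `a_r(X̄, M)` constraints, and
two stored representations of the same atom have the same identifier. -/
def PreNormal (χ : CState α) : Prop :=
  χ.goal = 0 ∧ (∀ c ∈ χ.store, ∃ a m, c.1 = TC.rep a m) ∧
  ∀ a m₁ m₂ i₁ i₂, (TC.rep a m₁, i₁) ∈ χ.store → (TC.rep a m₂, i₂) ∈ χ.store → i₁ = i₂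

/-- A rule instance is implied in a state `σ` if its conclusion is contained in
`chrToLa σ`. -/
def Implied (ι : Inst α) (χ : CState α) : Prop := ↑ι.concl ⊆ chrToLa χ

end LA2CHR

namespace LA2CHR

/-- Names of the six set/deletion-semantics rule schemas of `T(P)`. -/
inductive SDTag : Type
  | keepPos | mergePos | newPos | keepNeg | mergeNeg | newNeg
deriving DecidableEq

/-- Priorities of the set/deletion-semantics rules. -/
def SDTag.prio : SDTag → ℕ
  | .newPos => 2
  | .newNeg => 2
  | _ => 1

variable {α : Type}

/-- `HeadsHold χ t len a m`: the antecedents of the prefix of length `len` of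
set/deletion-semantics rule `t`, instantiated by the ground substitution determined by
`a` and (for rules with a mode variable) `m`, together with the corresponding guard
prefix, hold in state `χ`. -/
def HeadsHold (χ : CState α) : SDTag → ℕ → α → Mode → Prop
  | .keepPos, 1, a, m => ∃ i, (TC.rep a m, i) ∈ χ.store
  | .keepPos, 2, a, m => m ≠ Mode.n ∧ (∃ i, (TC.rep a m, i) ∈ χ.store) ∧
      ∃ j, (TC.raw a, j) ∈ χ.store
  | .mergePos, 1, a, m => m = Mode.n ∧ ∃ i, (TC.rep a m, i) ∈ χ.store
  | .mergePos, 2, a, m => m = Mode.n ∧ (∃ i, (TC.rep a m, i) ∈ χ.store) ∧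
      ∃ j, (TC.raw a, j) ∈ χ.store
  | .newPos, 1, a, _ => ∃ j, (TC.raw a, j) ∈ χ.store
  | .keepNeg, 1, a, m => ∃ i, (TC.rep a m, i) ∈ χ.store
  | .keepNeg, 2, a, m => m ≠ Mode.p ∧ (∃ i, (TC.rep a m, i) ∈ χ.store) ∧
      ∃ j, (TC.rawDel a, j) ∈ χ.store
  | .mergeNeg, 1, a, m => m = Mode.p ∧ ∃ i, (TC.rep a m, i) ∈ χ.store
  | .mergeNeg, 2, a, m => m = Mode.p ∧ (∃ i, (TC.rep a m, i) ∈ χ.store) ∧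
      ∃ j, (TC.rawDel a, j) ∈ χ.store
  | .newNeg, 1, a, _ => ∃ j, (TC.rawDel a, j) ∈ χ.store
  | _, _, _, _ => False

variable [DecidableEq α]

/-- Some rule instance of priority 1 is fireable in `χ` (its heads match, and its
history tuple is not in the propagation history): used to express that a state has
priority 2 or lower. -/
def Prio1Fireable (P : Set (Inst α)) (χ : CState α) : Prop :=
  ∃ t H R B, Fires P χ t H R B ∧ (t, H) ∉ χ.hist ∧ RuleTag.prio t = 1

/-- `true` for the CHR constraints that are assertions `a(X̄)` or `del(a(X̄))`. -/
def isAssert : TC α → Bool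
  | .raw _ => true
  | .rawDel _ => true
  | .rep _ _ => false

/-- The number of assertions of constraints `a(X̄)` and `del(a(X̄))` along a derivation
`f 0 → f 1 → ⋯ → f L` with transition labels `g`: the assertions in the initial goal,
plus the assertions in the body of each fired rule (after an `Apply` transition the
goal is exactly the instantiated rule body). -/
def AssertCount (f : ℕ → CState α) (g : ℕ → Lab α) (L : ℕ) : ℕ :=
  Multiset.countP (fun c => isAssert c = true) (f 0).goal +
    ∑ i ∈ Finset.range L,
      (match g i with
        | Lab.intro => 0
        | Lab.apply _ => Multiset.countP (fun c => isAssert c = true) (f (i + 1)).goal)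

end LA2CHR

/-! The uniqueness of representations is an invariant of all ω_p transitions, proved
together with four auxiliary facts: stored identifiers lie below the counter, the goal
contains at most one representation and none of an atom already represented in the
store, and every recorded firing of a set/deletion rule has a head that has since been
removed.  The one delicate case is `newPos` (dually `newNeg`): it creates `a_r(X̄, p)`
while `a(X̄)` is stored, so a stored `a_r(X̄, M)` would make `keepPos` or `mergePos`
applicable — with a fresh history tuple, since those rules remove the head `a(X̄)` —
and such a priority-1 firing would pre-empt the priority-2 rule `newPos`.

For the bound, every atom occurring in a state of a derivation was asserted earlier, and
a strong prefix firing is determined by its rule, prefix length, atom and mode. -/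

theorem Multiset.not_of_mem_erase_of_countP_le_one {β : Type*} [DecidableEq β] {p : β → Prop}
    [DecidablePred p] {s : Multiset β} {c d : β}
    (hs : s.countP p ≤ 1) (hc : c ∈ s) (hpc : p c) (hd : d ∈ s.erase c) : ¬ p d := by
  intro hpd
  rw [← Multiset.cons_erase hc, Multiset.countP_cons_of_pos _ hpc] at hs
  have : 0 < (s.erase c).countP p := Multiset.countP_pos.mpr ⟨d, hd, hpd⟩
  omega

namespace LA2CHR

variable {α : Type}

def TC.atom : TC α → α
  | .raw a => a
  | .rawDel a => a
  | .rep a _ => a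

def TC.isRep : TC α → Bool
  | .rep _ _ => true
  | _ => false

instance : Fintype Mode :=
  ⟨{.p, .n, .b}, fun m => by cases m <;> decide⟩

instance : Fintype SDTag :=
  ⟨{.keepPos, .mergePos, .newPos, .keepNeg, .mergeNeg, .newNeg}, fun t => by cases t <;> decide⟩

namespace Fires

variable {P : Set (Inst α)} {χ : CState α} {t : RuleTag α} {H R : Set (TC α × ℕ)}
  {B : Multiset (TC α)}

theorem countP_isRep_body_le_one (hF : Fires P χ t H R B) :
    B.countP (fun c => c.isRep = true) ≤ 1 := by
  cases hF with
  | inst ι =>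
    refine (Multiset.countP_eq_zero.mpr ?_).trans_le zero_le_one
    intro c hc
    obtain ⟨y, -, rfl⟩ := Multiset.mem_map.mp hc
    cases y <;> simp [toTC, TC.isRep]
  | _ => exact (Multiset.countP_le_card _ _).trans (by simp)

theorem exists_removed_head (hF : Fires P χ t H R B) (ht : ∀ ι, t ≠ .inst ι) :
    ∃ x ∈ H, x ∈ R ∧ x ∈ χ.store := by
  cases hF with
  | inst ι => exact absurd rfl (ht ι)
  | keepPos _ _ _ _ _ _ h | mergePos _ _ _ _ h | keepNeg _ _ _ _ _ _ h | mergeNeg _ _ _ _ h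
  | newPos _ _ h | newNeg _ _ h => exact ⟨_, by simp, by simp, h⟩

end Fires

structure Inv (χ : CState α) : Prop where
  id_lt_next : ∀ x ∈ χ.store, x.2 < χ.next
  rep_unique : ∀ a m₁ m₂ i₁ i₂, (TC.rep a m₁, i₁) ∈ χ.store →
    (TC.rep a m₂, i₂) ∈ χ.store → i₁ = i₂ ∧ m₁ = m₂
  countP_isRep_goal_le_one : χ.goal.countP (fun c => c.isRep = true) ≤ 1
  rep_goal_not_store : ∀ a m, TC.rep a m ∈ χ.goal → ∀ m' i, (TC.rep a m', i) ∉ χ.store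
  hist_removed : ∀ t H, (t, H) ∈ χ.hist → (∀ ι, t ≠ .inst ι) →
    ∃ x ∈ H, x ∉ χ.store ∧ x.2 < χ.next

namespace Inv

variable {χ : CState α}

theorem of_init (h : Init χ) : Inv χ where
  id_lt_next x hx := by simp [h.2.1] at hx
  rep_unique _ _ _ _ _ hx := by simp [h.2.1] at hx
  countP_isRep_goal_le_one := by
    rw [Multiset.countP_eq_zero.mpr]
    · exact zero_le_one
    · intro c hc
      obtain ⟨a, rfl | rfl⟩ := h.1 c hc <;> simp [TC.isRep]
  rep_goal_not_store _ _ _ _ _ hx := by simp [h.2.1] at hx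
  hist_removed _ _ ht := by simp [h.2.2] at ht

theorem pair_not_mem_hist (hI : Inv χ) {t : RuleTag α} (ht : ∀ ι, t ≠ .inst ι)
    {x y : TC α × ℕ} (hx : x ∈ χ.store) (hy : y ∈ χ.store) : (t, {x, y}) ∉ χ.hist := by
  intro hmem
  obtain ⟨z, hz, hzs, -⟩ := hI.hist_removed t _ hmem ht
  rcases hz with rfl | rfl <;> contradiction

variable {P : Set (Inst α)}

theorem intro_step [DecidableEq α] (hI : Inv χ) {c : TC α} (hc : c ∈ χ.goal) :
    Inv ⟨χ.goal.erase c, insert (c, χ.next) χ.store, χ.hist, χ.next + 1⟩ where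
  id_lt_next x hx := by
    rcases hx with rfl | hx
    · exact Nat.lt_succ_self _
    · exact Nat.lt_succ_of_lt (hI.id_lt_next x hx)
  rep_unique a m₁ m₂ i₁ i₂ h₁ h₂ := by
    rcases h₁ with h₁ | h₁ <;> rcases h₂ with h₂ | h₂
    · obtain ⟨rfl, rfl⟩ := Prod.mk.inj h₁
      simp_all
    · cases Prod.mk.inj h₁ |>.1
      exact absurd h₂ (hI.rep_goal_not_store a m₁ hc m₂ i₂)
    · cases Prod.mk.inj h₂ |>.1
      exact absurd h₁ (hI.rep_goal_not_store a m₂ hc m₁ i₁)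
    · exact hI.rep_unique a m₁ m₂ i₁ i₂ h₁ h₂
  countP_isRep_goal_le_one :=
    (Multiset.countP_le_of_le _ (Multiset.erase_le c _)).trans hI.countP_isRep_goal_le_one
  rep_goal_not_store a m hm m' i hmem := by
    rcases hmem with hmem | hmem
    · cases Prod.mk.inj hmem |>.1
      exact Multiset.not_of_mem_erase_of_countP_le_one hI.countP_isRep_goal_le_one hc rfl hm rfl
    · exact hI.rep_goal_not_store a m (Multiset.mem_of_mem_erase hm) m' i hmem
  hist_removed t H ht hnot := by
    obtain ⟨x, hxH, hxs, hxn⟩ := hI.hist_removed t H ht hnot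
    refine ⟨x, hxH, ?_, Nat.lt_succ_of_lt hxn⟩
    rintro (rfl | hx)
    exacts [lt_irrefl _ hxn, hxs hx]

theorem rep_not_mem_of_raw_of_prio_two (hI : Inv χ)
    (hpr : ∀ t H R B, Fires P χ t H R B → (t, H) ∉ χ.hist → 2 ≤ t.prio)
    {a : α} {j : ℕ} (hraw : (TC.raw a, j) ∈ χ.store) (m : Mode) (i : ℕ) :
    (TC.rep a m, i) ∉ χ.store := by
  intro hrep
  rcases eq_or_ne m .n with rfl | hm
  · exact Nat.not_succ_le_self 1 (hpr _ _ _ _ (.mergePos a i j hrep hraw)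
      (hI.pair_not_mem_hist (by simp) hrep hraw))
  · exact Nat.not_succ_le_self 1 (hpr _ _ _ _ (.keepPos a m i j hm hrep hraw)
      (hI.pair_not_mem_hist (by simp) hrep hraw))

theorem rep_not_mem_of_rawDel_of_prio_two (hI : Inv χ)
    (hpr : ∀ t H R B, Fires P χ t H R B → (t, H) ∉ χ.hist → 2 ≤ t.prio)
    {a : α} {j : ℕ} (hdel : (TC.rawDel a, j) ∈ χ.store) (m : Mode) (i : ℕ) :
    (TC.rep a m, i) ∉ χ.store := by
  intro hrep
  rcases eq_or_ne m .p with rfl | hm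
  · exact Nat.not_succ_le_self 1 (hpr _ _ _ _ (.mergeNeg a i j hrep hdel)
      (hI.pair_not_mem_hist (by simp) hrep hdel))
  · exact Nat.not_succ_le_self 1 (hpr _ _ _ _ (.keepNeg a m i j hm hrep hdel)
      (hI.pair_not_mem_hist (by simp) hrep hdel))

theorem apply_step (hI : Inv χ) {t : RuleTag α} {H R : Set (TC α × ℕ)} {B : Multiset (TC α)}
    (hF : Fires P χ t H R B)
    (hpr : ∀ t' H' R' B', Fires P χ t' H' R' B' → (t', H') ∉ χ.hist →
      t.prio ≤ t'.prio) :
    Inv ⟨B, χ.store \ R, insert (t, H) χ.hist, χ.next⟩ where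
  id_lt_next x hx := hI.id_lt_next x hx.1
  rep_unique a m₁ m₂ i₁ i₂ h₁ h₂ := hI.rep_unique a m₁ m₂ i₁ i₂ h₁.1 h₂.1
  countP_isRep_goal_le_one := hF.countP_isRep_body_le_one
  rep_goal_not_store a m hm m' i hmem := by
    cases hF with
    | mergePos b k j hrep _ | mergeNeg b k j hrep _ =>
      cases Multiset.mem_singleton.mp hm
      obtain ⟨rfl, rfl⟩ := hI.rep_unique _ _ _ _ _ hrep hmem.1
      exact hmem.2 (.inl rfl)
    | newPos b j hraw =>
      cases Multiset.mem_singleton.mp hm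
      exact hI.rep_not_mem_of_raw_of_prio_two hpr hraw m' i hmem.1
    | newNeg b j hdel =>
      cases Multiset.mem_singleton.mp hm
      exact hI.rep_not_mem_of_rawDel_of_prio_two hpr hdel m' i hmem.1
    | keepPos | keepNeg => simp at hm
    | inst ι =>
      obtain ⟨y, -, hy⟩ := Multiset.mem_map.mp hm
      cases y <;> simp [toTC] at hy
  hist_removed t' H' ht' hnot := by
    rcases ht' with ht' | ht'
    · obtain ⟨rfl, rfl⟩ := Prod.mk.inj ht'
      obtain ⟨x, hxH, hxR, hxs⟩ := hF.exists_removed_head hnot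
      exact ⟨x, hxH, fun hx => hx.2 hxR, hI.id_lt_next x hxs⟩
    · obtain ⟨x, hxH, hxs, hxn⟩ := hI.hist_removed t' H' ht' hnot
      exact ⟨x, hxH, fun hx => hxs hx.1, hxn⟩

theorem step [DecidableEq α] (hI : Inv χ) {l : Lab α} {χ' : CState α} (h : Step P χ l χ') :
    Inv χ' := by
  cases h with
  | intro c hc => exact hI.intro_step hc
  | apply t H R B _ hF _ hpr => exact hI.apply_step hF hpr

theorem of_reachable [DecidableEq α] (h : Reachable P χ) : Inv χ := by
  obtain ⟨χ₀, h₀, hsteps⟩ := h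
  induction hsteps with
  | refl => exact of_init h₀
  | tail _ hs ih => exact ih.step hs.choose_spec

end Inv

def OccursIn (χ : CState α) (a : α) : Prop := ∃ c, memA χ c ∧ c.atom = a

theorem occursIn_of_mem_store {χ : CState α} {c : TC α} {i : ℕ} (h : (c, i) ∈ χ.store) :
    OccursIn χ c.atom :=
  ⟨c, .inr ⟨i, h⟩, rfl⟩

theorem HeadsHold.occursIn {χ : CState α} {t : SDTag} {len : ℕ} {a : α} {m : Mode}
    (h : HeadsHold χ t len a m) : OccursIn χ a := by
  unfold HeadsHold at h
  split at h
  all_goals first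
    | exact h.elim
    | exact occursIn_of_mem_store h.choose_spec
    | exact occursIn_of_mem_store h.2.choose_spec
    | exact occursIn_of_mem_store h.2.1.choose_spec

theorem Fires.isAssert_or_occursIn_of_mem_body {P : Set (Inst α)}
    {χ : CState α} {t : RuleTag α} {H R : Set (TC α × ℕ)} {B : Multiset (TC α)}
    (hF : Fires P χ t H R B) {c : TC α} (hc : c ∈ B) :
    isAssert c = true ∨ OccursIn χ c.atom := by
  cases hF with
  | keepPos | keepNeg => simp at hc
  | mergePos _ _ _ _ h | mergeNeg _ _ _ _ h | newPos _ _ h | newNeg _ _ h =>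
    cases Multiset.mem_singleton.mp hc
    exact .inr ⟨_, .inr ⟨_, h⟩, rfl⟩
  | inst ι =>
    obtain ⟨y, -, rfl⟩ := Multiset.mem_map.mp hc
    exact .inl (by cases y <;> rfl)

section Counting

variable [DecidableEq α]

theorem Step.occursIn_or_asserted {P : Set (Inst α)} {χ χ' : CState α} {l : Lab α}
    (h : Step P χ l χ') {d : TC α} (hd : memA χ' d) :
    OccursIn χ d.atom ∨ (∃ t, l = .apply t) ∧ d ∈ χ'.goal ∧ isAssert d = true := by
  cases h with
  | intro c hc =>
    refine .inl ?_
    rcases hd with hd | ⟨i, hd | hd⟩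
    · exact ⟨d, .inl (Multiset.mem_of_mem_erase hd), rfl⟩
    · cases (Prod.mk.inj hd).1
      exact ⟨d, .inl hc, rfl⟩
    · exact occursIn_of_mem_store hd
  | apply t H R B _ hF _ _ =>
    rcases hd with hd | ⟨i, hd⟩
    · rcases hF.isAssert_or_occursIn_of_mem_body hd with hA | hO
      exacts [.inr ⟨⟨t, rfl⟩, hd, hA⟩, .inl hO]
    · exact .inl (occursIn_of_mem_store hd.1)

def assertedAtoms (s : Multiset (TC α)) : Finset α :=
  ((s.filter fun c => isAssert c = true).map TC.atom).toFinset

theorem atom_mem_assertedAtoms {s : Multiset (TC α)} {c : TC α} (hc : c ∈ s)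
    (hA : isAssert c = true) : c.atom ∈ assertedAtoms s :=
  Multiset.mem_toFinset.mpr (Multiset.mem_map_of_mem _ (Multiset.mem_filter.mpr ⟨hc, hA⟩))

theorem card_assertedAtoms_le (s : Multiset (TC α)) :
    (assertedAtoms s).card ≤ s.countP fun c => isAssert c = true := by
  rw [Multiset.countP_eq_card_filter, ← Multiset.card_map TC.atom]
  exact Multiset.toFinset_card_le _

def assertedAtomsUpTo (f : ℕ → CState α) (g : ℕ → Lab α) (n : ℕ) : Finset α :=
  assertedAtoms (f 0).goal ∪ (Finset.range n).biUnion fun i =>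
    match g i with
    | .intro => ∅
    | .apply _ => assertedAtoms (f (i + 1)).goal

theorem assertedAtomsUpTo_mono (f : ℕ → CState α) (g : ℕ → Lab α) :
    Monotone (assertedAtomsUpTo f g) := fun _ _ h =>
  Finset.union_subset_union subset_rfl
    (Finset.biUnion_subset_biUnion_of_subset_left _ (Finset.range_subset_range.mpr h))

theorem assertedAtoms_subset_assertedAtomsUpTo_succ (f : ℕ → CState α) {g : ℕ → Lab α}
    {j : ℕ} {t : RuleTag α} (h : g j = .apply t) :
    assertedAtoms (f (j + 1)).goal ⊆ assertedAtomsUpTo f g (j + 1) := fun _ hx =>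
  Finset.mem_union_right _ <| Finset.mem_biUnion.mpr
    ⟨j, Finset.self_mem_range_succ j, by rwa [h]⟩

theorem card_assertedAtomsUpTo_le (f : ℕ → CState α) (g : ℕ → Lab α) (L : ℕ) :
    (assertedAtomsUpTo f g L).card ≤ AssertCount f g L := by
  refine (Finset.card_union_le _ _).trans (add_le_add (card_assertedAtoms_le _) ?_)
  refine Finset.card_biUnion_le.trans (Finset.sum_le_sum fun i _ => ?_)
  cases g i
  · exact le_rfl
  · exact card_assertedAtoms_le _

theorem mem_assertedAtomsUpTo_of_occursIn {P : Set (Inst α)} {f : ℕ → CState α}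
    {g : ℕ → Lab α} {L : ℕ} (h₀ : Init (f 0))
    (hsteps : ∀ i < L, Step P (f i) (g i) (f (i + 1))) :
    ∀ j ≤ L, ∀ a, OccursIn (f j) a → a ∈ assertedAtomsUpTo f g j := by
  intro j
  induction j with
  | zero =>
    rintro - _ ⟨c, hc | ⟨i, hi⟩, rfl⟩
    · obtain ⟨a, rfl | rfl⟩ := h₀.1 c hc <;>
        exact Finset.mem_union_left _ (atom_mem_assertedAtoms hc rfl)
    · simp [h₀.2.1] at hi
  | succ j ih =>
    rintro hj _ ⟨d, hd, rfl⟩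
    rcases (hsteps j hj).occursIn_or_asserted hd with hO | ⟨⟨t, ht⟩, hdg, hA⟩
    · exact assertedAtomsUpTo_mono f g j.le_succ (ih (by omega) _ hO)
    · exact assertedAtoms_subset_assertedAtomsUpTo_succ f ht (atom_mem_assertedAtoms hdg hA)

end Counting

end LA2CHR

open LA2CHR in
/-- In the translated program `T(P)`, for any initial goal containing no `a_r`
constraints, in every ω_p-reachable state two stored constraints `a_r(X̄, M₁)#i₁` and
`a_r(X̄, M₂)#i₂` with the same predicate and arguments satisfy `i₁ = i₂` and
`M₁ = M₂` — every assertion is represented by at most one `a_r` constraint in the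
store.  Consequently, along any ω_p derivation from an initial state, the number of
strong prefix firings of the set/deletion-semantics rules (prefix instances whose
antecedents and guard prefix hold in some state of the derivation whose priority is
lower than or equal to the rule's priority) is bounded by (a constant times) the
number of assertions of constraints `a(X̄)` and `del(a(X̄))`. -/
theorem representation_unique_and_setdel_prefix_firings_bounded
    {α : Type} [DecidableEq α] (P : Set (Inst α)) :
    (∀ χ : CState α, Reachable P χ →
      ∀ a m₁ m₂ i₁ i₂, (TC.rep a m₁, i₁) ∈ χ.store → (TC.rep a m₂, i₂) ∈ χ.store →
        i₁ = i₂ ∧ m₁ = m₂) ∧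
    ∃ C : ℕ, ∀ (L : ℕ) (f : ℕ → CState α) (g : ℕ → Lab α)
      (SPF : Finset (SDTag × ℕ × α × Mode)),
      Init (f 0) →
      (∀ i < L, Step P (f i) (g i) (f (i + 1))) →
      (∀ s ∈ SPF, 1 ≤ s.2.1 ∧ s.2.1 ≤ 2 ∧
        ∃ j ≤ L, HeadsHold (f j) s.1 s.2.1 s.2.2.1 s.2.2.2 ∧
          (SDTag.prio s.1 = 2 → ¬ Prio1Fireable P (f j))) →
      SPF.card ≤ C * AssertCount f g L := by
  refine ⟨fun χ hχ => (Inv.of_reachable hχ).rep_unique, 36, ?_⟩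
  intro L f g SPF h₀ hsteps hSPF
  have hsub : SPF ⊆ (Finset.univ : Finset SDTag) ×ˢ Finset.Icc 1 2 ×ˢ
      assertedAtomsUpTo f g L ×ˢ (Finset.univ : Finset Mode) := by
    rintro ⟨t, len, a, m⟩ hs
    obtain ⟨h₁, h₂, j, hj, hheads, -⟩ := hSPF _ hs
    have ha := mem_assertedAtomsUpTo_of_occursIn h₀ hsteps j hj a hheads.occursIn
    simpa [h₁, h₂] using assertedAtomsUpTo_mono f g hj ha
  calc SPF.card
      ≤ 6 * (2 * ((assertedAtomsUpTo f g L).card * 3)) := by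
        simpa [show Fintype.card SDTag = 6 from rfl, show Fintype.card Mode = 3 from rfl]
          using Finset.card_le_card hsub
    _ = 36 * (assertedAtomsUpTo f g L).card := by ring
    _ ≤ 36 * AssertCount f g L := Nat.mul_le_mul_left 36 (card_assertedAtomsUpTo_le f g L)
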